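/- Let r ≥ 3. If G is a K_{r+1}-free graph of order n, then the smallest signless Laplacian eigenvalue satisfies q_min(G) < (1 − 3/(3r−1))·n. -/

import Mathlib

/-!
Induction on `r`, through vertex neighbourhoods. Evaluating the Rayleigh quotient of `Q(G)` at a
standard basis vector gives `q_min(G) ≤ d(v)`. On the neighbourhood `N(u)` of a vertex `u`, the
principal submatrix of `Q(G)` exceeds `Q(G[N(u)])` only on the diagonal, by at most `n - d(u)`, so
interlacing gives `q_min(G) ≤ q_min(G[N(u)]) + n - d(u)`; and `G[N(u)]` is `K_r`-free when `G` is
`K_{r+1}`-free. Hence either some degree is already below the bound, or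
`d(u) ≥ (1 - 3/(3r-1)) n`, and then the induction hypothesis for `G[N(u)]` gives
`q_min(G) < n - 3 d(u)/(3r-4) ≤ (1 - 3/(3r-1)) n`.

The base case `r = 2` is `q_min(G) < 2n/5` for triangle-free `G`. A bipartite graph has `q_min = 0`
(the `±1` colouring vector lies in the kernel). Otherwise a shortest odd closed walk is an induced
cycle of length `m ≥ 5`, and no vertex has three neighbours on it, since that would close a shorter
odd walk. The alternating `±1` vector on the cycle then has Rayleigh quotient at most
`(2n + 4 - 2m)/m < 2n/5`.
-/

open Matrix SimpleGraph Finset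

/-- The signless Laplacian matrix `Q(G) = D + A` of a finite simple graph `G`. -/
noncomputable def signlessLaplacian {V : Type} [Fintype V] [DecidableEq V]
    (G : SimpleGraph V) : Matrix V V ℝ :=
  letI := Classical.decRel G.Adj
  Matrix.diagonal (fun v => (G.degree v : ℝ)) + G.adjMatrix ℝ

theorem signlessLaplacian_isHermitian {V : Type} [Fintype V] [DecidableEq V]
    (G : SimpleGraph V) : (signlessLaplacian G).IsHermitian := by
  letI := Classical.decRel G.Adj
  unfold signlessLaplacian
  refine Matrix.IsHermitian.add (Matrix.isHermitian_diagonal _) ?_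
  rw [Matrix.IsHermitian, conjTranspose_eq_transpose_of_trivial]
  exact G.isSymm_adjMatrix

/-- `qmin G` is the smallest eigenvalue of the signless Laplacian of `G`. -/
noncomputable def qmin {V : Type} [Fintype V] [DecidableEq V] (G : SimpleGraph V) : ℝ :=
  ⨅ i, (signlessLaplacian_isHermitian G).eigenvalues i

open scoped ComplexOrder

namespace Matrix.IsHermitian

variable {n m 𝕜 : Type*} [Fintype n] [DecidableEq n] [Fintype m] [DecidableEq m] [RCLike 𝕜]
  {A B : Matrix n n 𝕜}

theorem posSemidef_sub_smul_one_iff (hA : A.IsHermitian) (c : ℝ) :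
    (A - (c : 𝕜) • 1).PosSemidef ↔ ∀ i, c ≤ hA.eigenvalues i := by
  have hc : (c : 𝕜) • (1 : Matrix n n 𝕜) =
      Unitary.conjStarAlgAut 𝕜 _ hA.eigenvectorUnitary (diagonal fun _ ↦ (c : 𝕜)) := by
    simp [← smul_one_eq_diagonal]
  conv_lhs => rw [hA.spectral_theorem]
  rw [hc, ← map_sub, Unitary.conjStarAlgAut_apply,
    Unitary.isUnit_coe.posSemidef_star_right_conjugate_iff, diagonal_sub,
    posSemidef_diagonal_iff]
  simp

theorem posSemidef_sub_iInf_eigenvalues_smul_one (hA : A.IsHermitian) :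
    (A - ((⨅ i, hA.eigenvalues i : ℝ) : 𝕜) • 1).PosSemidef :=
  (hA.posSemidef_sub_smul_one_iff _).2 fun i ↦ ciInf_le (Set.finite_range _).bddBelow i

theorem iInf_eigenvalues_le_iInf_eigenvalues_submatrix [Nonempty m] (hA : A.IsHermitian)
    {e : m → n} (he : Function.Injective e) :
    ⨅ i, hA.eigenvalues i ≤ ⨅ j, (hA.submatrix e).eigenvalues j := by
  refine le_ciInf (((hA.submatrix e).posSemidef_sub_smul_one_iff _).1 ?_)
  simpa [submatrix_sub, submatrix_smul, submatrix_one e he] using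
    hA.posSemidef_sub_iInf_eigenvalues_smul_one.submatrix e

theorem iInf_eigenvalues_le_add_of_posSemidef [Nonempty n] (hA : A.IsHermitian)
    (hB : B.IsHermitian) {c : ℝ} (h : (B + (c : 𝕜) • 1 - A).PosSemidef) :
    ⨅ i, hA.eigenvalues i ≤ (⨅ i, hB.eigenvalues i) + c := by
  suffices (⨅ i, hA.eigenvalues i) - c ≤ ⨅ i, hB.eigenvalues i by linarith
  refine le_ciInf ((hB.posSemidef_sub_smul_one_iff _).1 ?_)
  convert h.add hA.posSemidef_sub_iInf_eigenvalues_smul_one using 1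
  push_cast
  module

theorem iInf_eigenvalues_mul_dotProduct_self_le {A : Matrix n n ℝ} (hA : A.IsHermitian)
    (x : n → ℝ) : (⨅ i, hA.eigenvalues i) * (x ⬝ᵥ x) ≤ x ⬝ᵥ A *ᵥ x := by
  have := hA.posSemidef_sub_iInf_eigenvalues_smul_one.dotProduct_mulVec_nonneg x
  simp only [star_trivial, sub_mulVec, smul_mulVec, one_mulVec, dotProduct_sub,
    dotProduct_smul] at this
  simpa [sub_nonneg] using this

theorem iInf_eigenvalues_le_diag {A : Matrix n n ℝ} (hA : A.IsHermitian) (i : n) :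
    ⨅ j, hA.eigenvalues j ≤ A i i := by
  simpa using hA.iInf_eigenvalues_mul_dotProduct_self_le (Pi.single i 1)

end Matrix.IsHermitian

theorem Matrix.sum_single_dotProduct_mulVec_sum_single {V ι R : Type*} [Fintype V]
    [DecidableEq V] [CommSemiring R] (M : Matrix V V R) (s : Finset ι) (f : ι → V) (y : ι → R) :
    (∑ i ∈ s, Pi.single (f i) (y i)) ⬝ᵥ M *ᵥ ∑ j ∈ s, Pi.single (f j) (y j) =
      ∑ i ∈ s, ∑ j ∈ s, y i * y j * M (f i) (f j) := by
  simp only [sum_dotProduct, mulVec_sum, dotProduct_sum, single_dotProduct, mulVec_single]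
  rw [sum_comm]
  simp [mul_comm, mul_left_comm]

theorem Matrix.sum_single_dotProduct_sum_single {V ι R : Type*} [Fintype V] [DecidableEq V]
    [CommSemiring R] {s : Finset ι} {f : ι → V} (hf : Set.InjOn f s) (y : ι → R) :
    (∑ i ∈ s, Pi.single (f i) (y i)) ⬝ᵥ ∑ j ∈ s, Pi.single (f j) (y j) = ∑ i ∈ s, y i * y i := by
  nth_rw 2 [← one_mulVec (∑ j ∈ s, _)]
  rw [sum_single_dotProduct_mulVec_sum_single]
  refine sum_congr rfl fun i hi ↦ ?_
  rw [sum_eq_single_of_mem i hi fun j hj hji ↦ by simp [hf.ne hi hj hji.symm]]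
  simp

theorem sum_neg_one_pow_cycle_adj {m : ℕ} (hm : 3 ≤ m) (hodd : Odd m) :
    ∑ i ∈ range m, ∑ j ∈ range m,
      (if j = i + 1 ∨ i = j + 1 ∨ (i = 0 ∧ j = m - 1) ∨ (j = 0 ∧ i = m - 1)
        then (-1 : ℝ) ^ (i + j) else 0) = 4 - 2 * m := by
  have h_split : ∀ i j, (if j = i + 1 ∨ i = j + 1 ∨ (i = 0 ∧ j = m - 1) ∨ (j = 0 ∧ i = m - 1)
      then (-1 : ℝ) ^ (i + j) else 0) =
      (if j = i + 1 then (-1 : ℝ) ^ (i + j) else 0) +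
        (if i = j + 1 then (-1 : ℝ) ^ (i + j) else 0) +
        (if i = 0 ∧ j = m - 1 then (-1 : ℝ) ^ (i + j) else 0) +
        (if j = 0 ∧ i = m - 1 then (-1 : ℝ) ^ (i + j) else 0) := by
    intro i j
    split_ifs <;> first | (exfalso; omega) | ring
  obtain ⟨k, rfl⟩ : ∃ k, m = k + 1 := ⟨m - 1, by omega⟩
  have h_even : Even k := by
    obtain ⟨t, ht⟩ := hodd
    exact ⟨t, by omega⟩
  simp only [h_split, sum_add_distrib]
  rw [sum_comm (f := fun i j ↦ if i = j + 1 then _ else _)]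
  have h_range : ∀ x ∈ range k, x < k := fun x hx ↦ mem_range.1 hx
  simp [sum_ite_eq', ite_and, sum_range_succ, h_even.neg_one_pow, sum_ite_of_true h_range]
  ring

namespace SimpleGraph

theorem cliqueFree_induce_neighborSet {V : Type*} {G : SimpleGraph V} {r : ℕ}
    (hG : G.CliqueFree (r + 1)) (u : V) : (G.induce (G.neighborSet u)).CliqueFree r := by
  rw [cliqueFree_induce_iff]
  simpa using CliqueFreeOn.of_succ G hG.cliqueFreeOn (Set.mem_univ u)

theorem degree_add_card_le_degree_induce_add {V : Type*} [Fintype V] [DecidableEq V]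
    (G : SimpleGraph V) [DecidableRel G.Adj] (s : Set V) [DecidablePred (· ∈ s)] (v : s) :
    G.degree v + Fintype.card s ≤ (G.induce s).degree v + Fintype.card V := by
  have h_induce : (G.induce s).degree v = #(G.neighborFinset v ∩ s.toFinset) := by
    rw [← card_neighborFinset_eq_degree, ← map_neighborFinset_induce, card_map]
  have h_outside : #(G.neighborFinset v \ s.toFinset) + Fintype.card s ≤ Fintype.card V := by
    rw [← Set.toFinset_card, card_sdiff_add_card]
    exact card_le_univ _
  rw [h_induce, ← card_neighborFinset_eq_degree, ← card_inter_add_card_sdiff _ s.toFinset]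
  omega

end SimpleGraph

section SignlessLaplacian

variable {V : Type} [Fintype V] [DecidableEq V] (G : SimpleGraph V)

theorem signlessLaplacian_eq [DecidableRel G.Adj] :
    signlessLaplacian G = diagonal (fun v ↦ (G.degree v : ℝ)) + G.adjMatrix ℝ := by
  rw [signlessLaplacian]
  congr 3 with v
  simp only [← card_neighborFinset_eq_degree, neighborFinset_eq_filter]
  congr!

theorem qmin_mul_dotProduct_self_le (x : V → ℝ) :
    qmin G * (x ⬝ᵥ x) ≤ x ⬝ᵥ signlessLaplacian G *ᵥ x :=
  (signlessLaplacian_isHermitian G).iInf_eigenvalues_mul_dotProduct_self_le x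

theorem qmin_le_degree [DecidableRel G.Adj] (v : V) : qmin G ≤ G.degree v :=
  calc qmin G ≤ signlessLaplacian G v v :=
        (signlessLaplacian_isHermitian G).iInf_eigenvalues_le_diag v
    _ = G.degree v := by simp [signlessLaplacian_eq]

theorem qmin_le_qmin_induce_add (s : Set V) [DecidablePred (· ∈ s)] [Nonempty s] :
    qmin G ≤ qmin (G.induce s) + (Fintype.card V - Fintype.card s) := by
  classical
  have hQ := signlessLaplacian_isHermitian G
  have h_diag : signlessLaplacian (G.induce s) + (Fintype.card V - Fintype.card s : ℝ) • 1 -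
      (signlessLaplacian G).submatrix Subtype.val Subtype.val =
      diagonal fun v ↦
        ((G.induce s).degree v + Fintype.card V - (G.degree v + Fintype.card s) : ℝ) := by
    ext v w
    by_cases h : v = w
    · subst h
      simp [signlessLaplacian_eq]
      ring
    · simp [signlessLaplacian_eq, h, Subtype.val_injective.ne h]
  calc qmin G ≤ ⨅ j, (hQ.submatrix Subtype.val).eigenvalues j :=
        hQ.iInf_eigenvalues_le_iInf_eigenvalues_submatrix Subtype.val_injective
    _ ≤ qmin (G.induce s) + (Fintype.card V - Fintype.card s) := by
        refine (hQ.submatrix _).iInf_eigenvalues_le_add_of_posSemidef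
          (signlessLaplacian_isHermitian _) ?_
        rw [RCLike.ofReal_real_eq_id, id, h_diag, posSemidef_diagonal_iff]
        intro v
        rw [sub_nonneg]
        exact_mod_cast G.degree_add_card_le_degree_induce_add s v

theorem qmin_nonpos_of_colorable_two [Nonempty V] (h : G.Colorable 2) : qmin G ≤ 0 := by
  classical
  obtain ⟨C⟩ := h
  set x : V → ℝ := fun v ↦ if C v = 0 then 1 else -1
  have h_anti : ∀ v w, G.Adj v w → x w = -x v := by
    intro v w hvw
    have := C.valid hvw
    simp only [x]
    generalize C v = a at this ⊢
    generalize C w = b at this ⊢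
    fin_cases a <;> fin_cases b <;> simp_all
  have h_ker : signlessLaplacian G *ᵥ x = 0 := by
    ext v
    rw [signlessLaplacian_eq, add_mulVec, Pi.add_apply, mulVec_diagonal, adjMatrix_mulVec_apply,
      sum_congr rfl fun w hw ↦ h_anti v w ((G.mem_neighborFinset v w).1 hw)]
    simp
  have h_norm : x ⬝ᵥ x = Fintype.card V := by
    simp only [dotProduct, x]
    simp [apply_ite (fun t : ℝ ↦ t * t)]
  have := qmin_mul_dotProduct_self_le G x
  rw [h_ker, dotProduct_zero, h_norm] at this
  exact nonpos_of_mul_nonpos_left this (by simp [Fintype.card_pos])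

end SignlessLaplacian

namespace SimpleGraph.Walk

variable {V : Type} {G : SimpleGraph V} {u v : V}

theorem exists_walk_getVert_getVert (p : G.Walk u v) {i j : ℕ} (hij : i ≤ j)
    (hj : j ≤ p.length) : ∃ q : G.Walk (p.getVert i) (p.getVert j), q.length = j - i :=
  ⟨((p.drop i).take (j - i)).copy rfl (by rw [drop_getVert, Nat.add_sub_cancel' hij]),
    by simp only [length_copy, take_length, drop_length]; omega⟩

theorem exists_walk_getVert_getVert_of_closed (p : G.Walk v v) {i j : ℕ} (hij : i ≤ j)
    (hj : j ≤ p.length) :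
    ∃ q : G.Walk (p.getVert j) (p.getVert i), q.length = p.length - (j - i) :=
  ⟨(p.drop j).append (p.take i), by simp only [length_append, take_length, drop_length]; omega⟩

def IsShortestOdd (W : G.Walk v v) : Prop :=
  Odd W.length ∧ ∀ (u : V) (q : G.Walk u u), Odd q.length → W.length ≤ q.length

theorem exists_isShortestOdd_of_not_colorable_two (h : ¬G.Colorable 2) :
    ∃ (v : V) (W : G.Walk v v), W.IsShortestOdd := by
  classical
  have h_ex : ∃ L, ∃ (v : V) (W : G.Walk v v), Odd W.length ∧ W.length = L := by
    simp only [two_colorable_iff_forall_loop_even, not_forall, Nat.not_even_iff_odd] at h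
    obtain ⟨v, W, hW⟩ := h
    exact ⟨_, v, W, hW, rfl⟩
  obtain ⟨v, W, hW, hL⟩ := Nat.find_spec h_ex
  exact ⟨v, W, hW, fun u q hq ↦ hL ▸ Nat.find_min' h_ex ⟨u, q, hq, rfl⟩⟩

namespace IsShortestOdd

variable {W : G.Walk v v}

/-- `q` closes up with one of the two arcs of `W` between its endpoints to an odd closed walk. -/
theorem le_length_of_walk_getVert (hW : W.IsShortestOdd) {a b : ℕ} (hab : a ≤ b)
    (hb : b ≤ W.length) (q : G.Walk (W.getVert a) (W.getVert b)) :
    (Even (b - a + q.length) → b - a ≤ q.length) ∧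
      (Odd (b - a + q.length) → W.length - (b - a) ≤ q.length) := by
  obtain ⟨h_odd, h_min⟩ := hW
  obtain ⟨q₁, hq₁⟩ := W.exists_walk_getVert_getVert hab hb
  obtain ⟨q₂, hq₂⟩ := W.exists_walk_getVert_getVert_of_closed hab hb
  rw [Nat.odd_iff] at h_odd
  constructor
  · intro h
    rw [Nat.even_iff] at h
    have := h_min _ (q.append q₂) (by rw [length_append, hq₂, Nat.odd_iff]; omega)
    rw [length_append, hq₂] at this
    omega
  · intro h
    have := h_min _ (q₁.append q.reverse) (by rwa [length_append, length_reverse, hq₁])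
    rw [length_append, length_reverse, hq₁] at this
    omega

theorem getVert_injOn (hW : W.IsShortestOdd) : Set.InjOn W.getVert (Set.Iio W.length) := by
  intro i hi j hj h
  wlog hij : i ≤ j generalizing i j
  · exact (this hj hi h.symm (by omega)).symm
  have := hW.le_length_of_walk_getVert hij (le_of_lt hj) (nil.copy rfl h)
  simp only [length_copy, length_nil, add_zero, Nat.even_iff, Nat.odd_iff] at this
  simp only [Set.mem_Iio] at hj
  omega

theorem adj_getVert_iff (hW : W.IsShortestOdd) {i j : ℕ} (hi : i < W.length)
    (hj : j < W.length) :
    G.Adj (W.getVert i) (W.getVert j) ↔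
      j = i + 1 ∨ i = j + 1 ∨ (i = 0 ∧ j = W.length - 1) ∨ (j = 0 ∧ i = W.length - 1) := by
  have h_odd := hW.1
  rw [Nat.odd_iff] at h_odd
  have h_wrap : G.Adj (W.getVert (W.length - 1)) (W.getVert 0) := by
    simpa [Nat.sub_add_cancel (by omega : 0 < W.length)] using
      W.adj_getVert_succ (i := W.length - 1) (by omega)
  constructor
  · intro h
    wlog hij : i ≤ j generalizing i j
    · have := this hj hi h.symm (by omega)
      omega
    have := hW.le_length_of_walk_getVert hij hj.le h.toWalk
    simp only [length_cons, length_nil, Nat.even_iff, Nat.odd_iff] at this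
    have : i ≠ j := fun e ↦ G.irrefl (e ▸ h)
    omega
  · rintro (rfl | rfl | ⟨rfl, rfl⟩ | ⟨rfl, rfl⟩)
    · exact W.adj_getVert_succ hi
    · exact (W.adj_getVert_succ hj).symm
    · exact h_wrap.symm
    · exact h_wrap

theorem card_adj_getVert_le_two [DecidableRel G.Adj] (hW : W.IsShortestOdd)
    (h_five : 5 ≤ W.length) (u : V) :
    #{i ∈ range W.length | G.Adj (W.getVert i) u} ≤ 2 := by
  have h_gap : ∀ a b, G.Adj (W.getVert a) u → G.Adj (W.getVert b) u → b < W.length → a < b →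
      b = a + 2 ∨ (W.length ≤ b - a + 2 ∧ (b - a) % 2 = 1) := by
    intro a b ha hb' hb hab
    have := hW.le_length_of_walk_getVert hab.le hb.le ((hb'.symm.toWalk).cons ha)
    simp only [length_cons, length_nil, Nat.even_iff, Nat.odd_iff] at this
    omega
  have h_odd := hW.1
  rw [Nat.odd_iff] at h_odd
  by_contra! h
  obtain ⟨a, ha, b, hb, c, hc, hab, hac, hbc⟩ := two_lt_card.1 h
  simp only [mem_filter, mem_range] at ha hb hc
  have := h_gap a b ha.2 hb.2 hb.1
  have := h_gap b a hb.2 ha.2 ha.1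
  have := h_gap a c ha.2 hc.2 hc.1
  have := h_gap c a hc.2 ha.2 ha.1
  have := h_gap b c hb.2 hc.2 hc.1
  have := h_gap c b hc.2 hb.2 hb.1
  omega

theorem five_le_length (hW : W.IsShortestOdd) (hG : G.CliqueFree 3) : 5 ≤ W.length := by
  have h_odd := hW.1
  rw [Nat.odd_iff] at h_odd
  have h_pos : 0 < W.length := by omega
  have h_one : W.length ≠ 1 := fun h ↦
    G.irrefl ((hW.adj_getVert_iff (i := 0) (j := 0) h_pos h_pos).2 (by omega))
  have h_three : W.length ≠ 3 := fun h ↦ by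
    classical
    refine hG {W.getVert 0, W.getVert 1, W.getVert 2} (is3Clique_triple_iff.2 ⟨?_, ?_, ?_⟩) <;>
      exact (hW.adj_getVert_iff (by omega) (by omega)).2 (by omega)
  omega

theorem sum_degree_getVert_le [Fintype V] [DecidableRel G.Adj] (hW : W.IsShortestOdd)
    (h_five : 5 ≤ W.length) :
    ∑ i ∈ range W.length, G.degree (W.getVert i) ≤ 2 * Fintype.card V := by
  calc ∑ i ∈ range W.length, G.degree (W.getVert i)
      = ∑ i ∈ range W.length, #(bipartiteAbove (fun i u ↦ G.Adj (W.getVert i) u) univ i) := by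
        simp [bipartiteAbove, ← card_neighborFinset_eq_degree, neighborFinset_eq_filter]
    _ = ∑ u, #{i ∈ range W.length | G.Adj (W.getVert i) u} :=
        sum_card_bipartiteAbove_eq_sum_card_bipartiteBelow _
    _ ≤ ∑ _u : V, 2 := sum_le_sum fun u _ ↦ hW.card_adj_getVert_le_two h_five u
    _ = 2 * Fintype.card V := by simp [mul_comm]

theorem qmin_mul_length_le [Fintype V] [DecidableEq V] [DecidableRel G.Adj]
    (hW : W.IsShortestOdd) (h_three : 3 ≤ W.length) :
    qmin G * W.length ≤
      ∑ i ∈ range W.length, (G.degree (W.getVert i) : ℝ) + 4 - 2 * W.length := by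
  -- The signs alternate along `W`, so on the induced cycle they cancel on every edge except the
  -- closing one between positions `W.length - 1` and `0`.
  set x : V → ℝ := ∑ i ∈ range W.length, Pi.single (W.getVert i) ((-1) ^ i) with hx
  have h_eq : ∀ i ∈ range W.length, ∀ j ∈ range W.length, W.getVert i = W.getVert j ↔ i = j :=
    fun i hi j hj ↦ hW.getVert_injOn.eq_iff (mem_range.1 hi) (mem_range.1 hj)
  have h_sq : ∀ i, (-1 : ℝ) ^ i * (-1) ^ i = 1 := fun i ↦ by
    rw [← mul_pow]
    norm_num
  have h_norm : x ⬝ᵥ x = W.length := by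
    rw [hx, sum_single_dotProduct_sum_single (by simpa using hW.getVert_injOn)]
    simp [h_sq]
  have h_form : x ⬝ᵥ signlessLaplacian G *ᵥ x =
      ∑ i ∈ range W.length, (G.degree (W.getVert i) : ℝ) + 4 - 2 * W.length := by
    rw [hx, sum_single_dotProduct_mulVec_sum_single]
    calc _ = ∑ i ∈ range W.length, ∑ j ∈ range W.length,
          ((if i = j then (G.degree (W.getVert i) : ℝ) else 0) +
            if j = i + 1 ∨ i = j + 1 ∨ (i = 0 ∧ j = W.length - 1) ∨ (j = 0 ∧ i = W.length - 1)
            then (-1 : ℝ) ^ (i + j) else 0) := by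
          refine sum_congr rfl fun i hi ↦ sum_congr rfl fun j hj ↦ ?_
          rw [signlessLaplacian_eq, Matrix.add_apply, diagonal_apply, adjMatrix_apply,
            if_congr (h_eq i hi j hj) rfl rfl,
            if_congr (hW.adj_getVert_iff (mem_range.1 hi) (mem_range.1 hj)) rfl rfl]
          split_ifs with hij <;> first | (subst hij; simp [h_sq]) | simp [pow_add]
      _ = _ := by
          rw [sum_congr rfl fun i _ ↦ sum_add_distrib, sum_add_distrib,
            sum_neg_one_pow_cycle_adj h_three hW.1,
            sum_congr rfl fun i hi ↦ by rw [sum_ite_eq, if_pos hi]]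
          ring
  have := qmin_mul_dotProduct_self_le G x
  rwa [h_norm, h_form] at this

end IsShortestOdd

end SimpleGraph.Walk

theorem qmin_lt_of_cliqueFree_three {V : Type} [Fintype V] [DecidableEq V] [Nonempty V]
    (G : SimpleGraph V) (hG : G.CliqueFree 3) :
    qmin G < 2 / 5 * Fintype.card V := by
  classical
  have hn : (0 : ℝ) < Fintype.card V := by exact_mod_cast Fintype.card_pos
  by_cases h_bip : G.Colorable 2
  · exact (qmin_nonpos_of_colorable_two G h_bip).trans_lt (by positivity)
  obtain ⟨v, W, hW⟩ := Walk.exists_isShortestOdd_of_not_colorable_two h_bip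
  have h_five := hW.five_le_length hG
  have h_deg : ∑ i ∈ range W.length, (G.degree (W.getVert i) : ℝ) ≤ 2 * Fintype.card V := by
    exact_mod_cast hW.sum_degree_getVert_le h_five
  have h_len : (5 : ℝ) ≤ W.length := by exact_mod_cast h_five
  have h_rayleigh := hW.qmin_mul_length_le (by omega)
  by_contra! h
  nlinarith [mul_le_mul_of_nonneg_right h (by linarith : (0 : ℝ) ≤ W.length)]

theorem qmin_lt_mul_card_of_cliqueFree {r : ℕ} (hr : 2 ≤ r) {V : Type} [Fintype V]
    [DecidableEq V] [Nonempty V] (G : SimpleGraph V) (hG : G.CliqueFree (r + 1)) :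
    qmin G < (1 - 3 / (3 * r - 1)) * Fintype.card V := by
  induction r, hr using Nat.le_induction generalizing V with
  | base =>
    convert qmin_lt_of_cliqueFree_three G hG using 2
    norm_num
  | succ r hr ih =>
    classical
    have h_pos : (0 : ℝ) < 3 * r - 1 := by
      have : (2 : ℝ) ≤ r := by exact_mod_cast hr
      linarith
    set c : ℝ := 1 - 3 / (3 * ((r + 1 : ℕ) : ℝ) - 1)
    have hc : c = (3 * r - 1) / (3 * r + 2) := by
      have : (3 : ℝ) * r + 2 ≠ 0 := by positivity
      simp only [c]
      push_cast
      rw [show (3 : ℝ) * (r + 1) - 1 = 3 * r + 2 by ring]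
      field_simp
      ring
    by_cases h_low : ∃ v, (G.degree v : ℝ) < c * Fintype.card V
    · obtain ⟨v, hv⟩ := h_low
      exact (qmin_le_degree G v).trans_lt hv
    simp only [not_exists, not_lt] at h_low
    obtain ⟨u⟩ := ‹Nonempty V›
    have h_card : Fintype.card (G.neighborSet u) = G.degree u := by
      convert G.card_neighborSet_eq_degree u
    have : Nonempty (G.neighborSet u) := by
      rw [← Fintype.card_pos_iff, h_card]
      have : 0 < c * Fintype.card V := by rw [hc]; positivity
      exact_mod_cast this.trans_le (h_low u)
    have h_nbhd := ih (G.induce (G.neighborSet u)) (G.cliqueFree_induce_neighborSet hG u)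
    have h_ext := qmin_le_qmin_induce_add G (G.neighborSet u)
    rw [h_card] at h_nbhd h_ext
    calc qmin G ≤ qmin (G.induce (G.neighborSet u)) + (Fintype.card V - G.degree u) := h_ext
      _ < (1 - 3 / (3 * r - 1)) * G.degree u + (Fintype.card V - G.degree u) := by gcongr
      _ = Fintype.card V - 3 / (3 * r - 1) * G.degree u := by ring
      _ ≤ Fintype.card V - 3 / (3 * r - 1) * (c * Fintype.card V) := by gcongr; exact h_low u
      _ = c * Fintype.card V := by rw [hc]; field_simp; ring

/-- If `r ≥ 3` and `G` is a `K_{r+1}`-free graph of order `n`, then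
`qmin G < (1 - 3/(3r - 1))·n`. -/
theorem qmin_lt_of_cliqueFree {r n : ℕ} (hr : 3 ≤ r) (hn : 0 < n)
    (G : SimpleGraph (Fin n)) (hG : G.CliqueFree (r + 1)) :
    qmin G < (1 - 3 / (3 * (r : ℝ) - 1)) * n := by
  have : Nonempty (Fin n) := ⟨⟨0, hn⟩⟩
  simpa using qmin_lt_mul_card_of_cliqueFree (by omega) G hG
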